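/- arXiv:2006.09705 — 8 statements merged into one kernel-verified Lean document; each statement's English description precedes it below -/
import Mathlib

section
/- Let A be a formula built from the propositional variables p_1, …, p_n using only the connectives ∧ and ∨, and let I = {i_1, …, i_k} ⊆ {1, …, n}. If the formula ⋀_{j=1}^k p_{i_j} → A is a classical tautology (true under every Boolean valuation), then the sequent (p_{i_1} ∧ 1) * (p_{i_2} ∧ 1) * ⋯ * (p_{i_k} ∧ 1) ⇒ A is provable in WL. -/
inductive WLForm : Type
  | var : Nat → WLForm
  | one : WLForm
  | bot : WLForm
  | conj : WLForm → WLForm → WLForm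
  | disj : WLForm → WLForm → WLForm
  | fuse : WLForm → WLForm → WLForm
  | ldiv : WLForm → WLForm → WLForm
  deriving DecidableEq

/-- The sequent calculus `WL` (weak Lambek): single-conclusion sequents over
`{1, ⊥, ∧, ∨, *, \}`, with initial sequents `φ ⇒ φ`, `Γ, ⊥, Σ ⇒ Δ`, `⇒ 1`,
the cut rule, `(1w)`, the left/right rules for `∧`, `∨`, `*` and `(R\)`.
No structural rules. -/
inductive WL : List WLForm → Option WLForm → Prop
  | id (A : WLForm) : WL [A] (some A)
  | botL (X Y : List WLForm) (D : Option WLForm) : WL (X ++ WLForm.bot :: Y) D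
  | oneR : WL [] (some WLForm.one)
  | cut {X Y Z : List WLForm} {D : Option WLForm} {A : WLForm} :
      WL X (some A) → WL (Y ++ A :: Z) D → WL (Y ++ X ++ Z) D
  | oneW {X Y : List WLForm} {D : Option WLForm} :
      WL (X ++ Y) D → WL (X ++ WLForm.one :: Y) D
  | conjL1 {X Y : List WLForm} {D : Option WLForm} {A : WLForm} (B : WLForm) :
      WL (X ++ A :: Y) D → WL (X ++ WLForm.conj A B :: Y) D
  | conjL2 {X Y : List WLForm} {D : Option WLForm} {B : WLForm} (A : WLForm) :
      WL (X ++ B :: Y) D → WL (X ++ WLForm.conj A B :: Y) D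
  | conjR {X : List WLForm} {A B : WLForm} :
      WL X (some A) → WL X (some B) → WL X (some (WLForm.conj A B))
  | disjL {X Y : List WLForm} {D : Option WLForm} {A B : WLForm} :
      WL (X ++ A :: Y) D → WL (X ++ B :: Y) D → WL (X ++ WLForm.disj A B :: Y) D
  | disjR1 {X : List WLForm} {A : WLForm} (B : WLForm) :
      WL X (some A) → WL X (some (WLForm.disj A B))
  | disjR2 {X : List WLForm} {B : WLForm} (A : WLForm) :
      WL X (some B) → WL X (some (WLForm.disj A B))
  | fuseL {X Y : List WLForm} {D : Option WLForm} {A B : WLForm} :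
      WL (X ++ A :: B :: Y) D → WL (X ++ WLForm.fuse A B :: Y) D
  | fuseR {X Y : List WLForm} {A B : WLForm} :
      WL X (some A) → WL Y (some B) → WL (X ++ Y) (some (WLForm.fuse A B))
  | ldivR {X : List WLForm} {A B : WLForm} :
      WL (A :: X) (some B) → WL X (some (WLForm.ldiv A B))

/-- Formulas built from propositional variables using only `∧` and `∨`. -/
inductive AO : Type
  | var : Nat → AO
  | conj : AO → AO → AO
  | disj : AO → AO → AO

def AO.eval (v : Nat → Bool) : AO → Bool
  | AO.var n => v n
  | AO.conj a b => a.eval v && b.eval v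
  | AO.disj a b => a.eval v || b.eval v

/-- `A^{σ_v}`: substitute `1` for atoms assigned true by `v` and `⊥` for atoms
assigned false. -/
def AO.substV (v : Nat → Bool) : AO → WLForm
  | AO.var n => if v n then WLForm.one else WLForm.bot
  | AO.conj a b => WLForm.conj (a.substV v) (b.substV v)
  | AO.disj a b => WLForm.disj (a.substV v) (b.substV v)

def AO.vars : AO → Finset Nat
  | AO.var n => {n}
  | AO.conj a b => a.vars ∪ b.vars
  | AO.disj a b => a.vars ∪ b.vars

def AO.toWL : AO → WLForm
  | AO.var n => WLForm.var n
  | AO.conj a b => WLForm.conj a.toWL b.toWL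
  | AO.disj a b => WLForm.disj a.toWL b.toWL

/-- Iterated fusion (the empty fusion is `1`). -/
def bigFuse : List WLForm → WLForm
  | [] => WLForm.one
  | [A] => A
  | A :: B :: rest => WLForm.fuse A (bigFuse (B :: rest))

lemma wl_fuseAll (L : List WLForm) (X : List WLForm) (D : Option WLForm)
    (h : WL (X ++ L) D) : WL (X ++ [bigFuse L]) D := by
  induction L generalizing X with
  | nil =>
    have := WL.oneW (X := X) (Y := []) (by simpa using h)
    simpa [bigFuse] using this
  | cons a L ih =>
    cases L with
    | nil => simpa [bigFuse] using h
    | cons b L' =>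
      have h1 := ih (X ++ [a]) (by simpa using h)
      have h2 : WL (X ++ a :: bigFuse (b :: L') :: []) D := by simpa using h1
      have h3 := WL.fuseL (X := X) (Y := []) h2
      simpa [bigFuse] using h3

lemma wl_weakF (J : List Nat) (X Y : List WLForm) (D : Option WLForm)
    (h : WL (X ++ Y) D) :
    WL (X ++ J.map (fun i => WLForm.conj (WLForm.var i) WLForm.one) ++ Y) D := by
  induction J with
  | nil => simpa using h
  | cons j J ih =>
    have h1 := WL.oneW (X := X)
      (Y := J.map (fun i => WLForm.conj (WLForm.var i) WLForm.one) ++ Y)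
      (by simpa using ih)
    have h2 := WL.conjL2 (X := X)
      (Y := J.map (fun i => WLForm.conj (WLForm.var i) WLForm.one) ++ Y)
      (B := WLForm.one) (WLForm.var j) h1
    simpa using h2

lemma wl_main (I : List Nat) (A : AO)
    (h : A.eval (fun i => decide (i ∈ I)) = true) :
    WL (I.map (fun i => WLForm.conj (WLForm.var i) WLForm.one)) (some A.toWL) := by
  induction A with
  | var n =>
    simp [AO.eval] at h
    obtain ⟨I1, I2, rfl⟩ := List.append_of_mem h
    have base : WL [WLForm.var n] (some (WLForm.var n)) := WL.id _
    have h1 := wl_weakF I1 [] [WLForm.var n] (some (WLForm.var n)) (by simpa using base)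
    have h2 := wl_weakF I2
      ((I1.map (fun i => WLForm.conj (WLForm.var i) WLForm.one)) ++ [WLForm.var n]) []
      (some (WLForm.var n)) (by simpa using h1)
    have h3 : WL ((I1.map (fun i => WLForm.conj (WLForm.var i) WLForm.one)) ++
        WLForm.var n :: (I2.map (fun i => WLForm.conj (WLForm.var i) WLForm.one)))
        (some (WLForm.var n)) := by simpa using h2
    have h4 := WL.conjL1 (X := I1.map (fun i => WLForm.conj (WLForm.var i) WLForm.one))
      (Y := I2.map (fun i => WLForm.conj (WLForm.var i) WLForm.one))
      (B := WLForm.one) h3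
    simpa [AO.toWL] using h4
  | conj a b iha ihb =>
    simp [AO.eval] at h
    exact WL.conjR (iha h.1) (ihb h.2)
  | disj a b iha ihb =>
    simp [AO.eval] at h
    rcases h with h | h
    · exact WL.disjR1 _ (iha h)
    · exact WL.disjR2 _ (ihb h)

theorem statement_1 (n : Nat) (A : AO) (hA : A.vars ⊆ Finset.Icc 1 n)
    (I : List Nat) (hnd : I.Nodup) (hI : ∀ i ∈ I, i ∈ Finset.Icc 1 n)
    (htaut : ∀ v : Nat → Bool, (∀ i ∈ I, v i = true) → A.eval v = true) :
    WL [bigFuse (I.map fun i => WLForm.conj (WLForm.var i) WLForm.one)] (some A.toWL) := by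
  have h := wl_main I A (htaut (fun i => decide (i ∈ I)) (by intro i hi; simpa using hi))
  simpa using wl_fuseAll (I.map fun i => WLForm.conj (WLForm.var i) WLForm.one) [] _ (by simpa using h)
end

section
/- Suppose the classical propositional formulas α_1 → α_2 and β_1 → β_2 have no propositional variables in common. If α_1 ∧ β_1 → α_2 ∨ β_2 is a classical tautology (true under every Boolean valuation), then α_1 → α_2 is a classical tautology or β_1 → β_2 is a classical tautology. -/
inductive PForm : Type
  | var : Nat → PForm
  | top : PForm
  | bot : PForm
  | conj : PForm → PForm → PForm
  | disj : PForm → PForm → PForm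
  | imp : PForm → PForm → PForm
  | neg : PForm → PForm

def PForm.eval (v : Nat → Bool) : PForm → Bool
  | PForm.var n => v n
  | PForm.top => true
  | PForm.bot => false
  | PForm.conj a b => a.eval v && b.eval v
  | PForm.disj a b => a.eval v || b.eval v
  | PForm.imp a b => !a.eval v || b.eval v
  | PForm.neg a => !a.eval v

def PForm.vars : PForm → Finset Nat
  | PForm.var n => {n}
  | PForm.top => ∅
  | PForm.bot => ∅
  | PForm.conj a b => a.vars ∪ b.vars
  | PForm.disj a b => a.vars ∪ b.vars
  | PForm.imp a b => a.vars ∪ b.vars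
  | PForm.neg a => a.vars

/-- A classical tautology: true under every Boolean valuation. -/
def Taut (A : PForm) : Prop := ∀ v : Nat → Bool, A.eval v = true

lemma eval_congr (A : PForm) (v w : Nat → Bool) (h : ∀ n ∈ A.vars, v n = w n) :
    A.eval v = A.eval w := by
  induction A with
  | var n => exact h n (by simp [PForm.vars])
  | top => rfl
  | bot => rfl
  | conj a b ha hb =>
    simp only [PForm.eval]
    rw [ha (fun n hn => h n (by simp [PForm.vars, hn])),
        hb (fun n hn => h n (by simp [PForm.vars, hn]))]
  | disj a b ha hb =>
    simp only [PForm.eval]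
    rw [ha (fun n hn => h n (by simp [PForm.vars, hn])),
        hb (fun n hn => h n (by simp [PForm.vars, hn]))]
  | imp a b ha hb =>
    simp only [PForm.eval]
    rw [ha (fun n hn => h n (by simp [PForm.vars, hn])),
        hb (fun n hn => h n (by simp [PForm.vars, hn]))]
  | neg a ha =>
    simp only [PForm.eval]
    rw [ha (fun n hn => h n (by simp [PForm.vars, hn]))]

theorem statement_3 (a1 a2 b1 b2 : PForm)
    (hdisj : Disjoint (PForm.imp a1 a2).vars (PForm.imp b1 b2).vars)
    (h : Taut (PForm.imp (PForm.conj a1 b1) (PForm.disj a2 b2))) :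
    Taut (PForm.imp a1 a2) ∨ Taut (PForm.imp b1 b2) := by
  by_contra hc
  push_neg at hc
  obtain ⟨h1, h2⟩ := hc
  simp only [Taut, not_forall] at h1 h2
  obtain ⟨v1, hv1⟩ := h1
  obtain ⟨v2, hv2⟩ := h2
  set w : Nat → Bool := fun n => if n ∈ (PForm.imp a1 a2).vars then v1 n else v2 n with hw
  have key : ∀ A : PForm, A.vars ⊆ (PForm.imp a1 a2).vars → A.eval w = A.eval v1 := by
    intro A hA
    apply eval_congr
    intro n hn
    simp [hw, hA hn]
  have key2 : ∀ A : PForm, A.vars ⊆ (PForm.imp b1 b2).vars → A.eval w = A.eval v2 := by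
    intro A hA
    apply eval_congr
    intro n hn
    have : n ∉ (PForm.imp a1 a2).vars := fun hn' =>
      (Finset.disjoint_left.mp hdisj hn') (hA hn)
    simp [hw, this]
  have ka1 : a1.eval w = a1.eval v1 := key a1 (by simp [PForm.vars, Finset.subset_union_left])
  have ka2 : a2.eval w = a2.eval v1 := key a2 (by simp [PForm.vars, Finset.subset_union_right])
  have kb1 : b1.eval w = b1.eval v2 := key2 b1 (by simp [PForm.vars, Finset.subset_union_left])
  have kb2 : b2.eval w = b2.eval v2 := key2 b2 (by simp [PForm.vars, Finset.subset_union_right])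
  have hT := h w
  simp only [PForm.eval, Bool.or_eq_true, Bool.not_eq_true', Bool.and_eq_true,
    Bool.not_eq_false'] at hT hv1 hv2
  obtain ⟨ha1, ha2⟩ : a1.eval v1 = true ∧ a2.eval v1 = false := by
    cases h1 : a1.eval v1 <;> cases h2 : a2.eval v1 <;> simp_all
  obtain ⟨hb1, hb2⟩ : b1.eval v2 = true ∧ b2.eval v2 = false := by
    cases h1 : b1.eval v2 <;> cases h2 : b2.eval v2 <;> simp_all
  rw [ka1, ka2, kb1, kb2, ha1, ha2, hb1, hb2] at hT
  simp at hT
end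

section
/- Let Γ be a finite sequence of formulas and A a formula over the language {1, ⊥, ∧, ∨, *, \}. If the sequent Γ ⇒ A is provable in WL, then the sequent Γ^t ⇒ A^t is provable in BPC. -/
inductive BForm : Type
  | var : Nat → BForm
  | top : BForm
  | bot : BForm
  | conj : BForm → BForm → BForm
  | disj : BForm → BForm → BForm
  | imp : BForm → BForm → BForm
  deriving DecidableEq

/-- The sequent calculus `BPC` (on multisets) augmented with the initial sequents
`⇒ γ` for `γ ∈ H`.  Plain `BPC` is `BPCfrom ∅`. -/
inductive BPCfrom (H : Set BForm) : Multiset BForm → Multiset BForm → Prop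
  | hyp {A : BForm} : A ∈ H → BPCfrom H 0 {A}
  | id (U X : Multiset BForm) (A : BForm) : BPCfrom H (A ::ₘ U) (A ::ₘ X)
  | topR (U X : Multiset BForm) : BPCfrom H U (BForm.top ::ₘ X)
  | botL (U X : Multiset BForm) : BPCfrom H (BForm.bot ::ₘ U) X
  | conjL {U X : Multiset BForm} {A B : BForm} :
      BPCfrom H (A ::ₘ B ::ₘ U) X → BPCfrom H (BForm.conj A B ::ₘ U) X
  | conjR {U X : Multiset BForm} {A B : BForm} :
      BPCfrom H U (A ::ₘ X) → BPCfrom H U (B ::ₘ X) → BPCfrom H U (BForm.conj A B ::ₘ X)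
  | disjL {U X : Multiset BForm} {A B : BForm} :
      BPCfrom H (A ::ₘ U) X → BPCfrom H (B ::ₘ U) X → BPCfrom H (BForm.disj A B ::ₘ U) X
  | disjR {U X : Multiset BForm} {A B : BForm} :
      BPCfrom H U (A ::ₘ B ::ₘ X) → BPCfrom H U (BForm.disj A B ::ₘ X)
  | impR {U : Multiset BForm} {A B : BForm} (X : Multiset BForm) :
      BPCfrom H (A ::ₘ U) {B} → BPCfrom H U (BForm.imp A B ::ₘ X)
  | distr {U X : Multiset BForm} {A B C : BForm} :
      BPCfrom H (BForm.conj A B ::ₘ U) X → BPCfrom H (BForm.conj A C ::ₘ U) X →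
      BPCfrom H (BForm.conj A (BForm.disj B C) ::ₘ U) X
  | tran {U : Multiset BForm} {A B C : BForm} (X : Multiset BForm) :
      BPCfrom H U {BForm.imp A B} → BPCfrom H U {BForm.imp B C} →
      BPCfrom H U (BForm.imp A C ::ₘ X)
  | fconj {U : Multiset BForm} {A B C : BForm} (X : Multiset BForm) :
      BPCfrom H U {BForm.imp A B} → BPCfrom H U {BForm.imp A C} →
      BPCfrom H U (BForm.imp A (BForm.conj B C) ::ₘ X)
  | fdisj {U : Multiset BForm} {A B C : BForm} (X : Multiset BForm) :
      BPCfrom H U {BForm.imp A C} → BPCfrom H U {BForm.imp B C} →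
      BPCfrom H U (BForm.imp (BForm.disj A B) C ::ₘ X)
  | cut {U1 U2 X1 X2 : Multiset BForm} {A : BForm} :
      BPCfrom H U1 (A ::ₘ X1) → BPCfrom H (A ::ₘ U2) X2 →
      BPCfrom H (U1 + U2) (X1 + X2)

/-- The translation `t` into the language `{∧, ∨, →, ⊤, ⊥}`. -/
def trB : WLForm → BForm
  | WLForm.var n => BForm.var n
  | WLForm.one => BForm.top
  | WLForm.bot => BForm.bot
  | WLForm.conj a b => BForm.conj (trB a) (trB b)
  | WLForm.disj a b => BForm.disj (trB a) (trB b)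
  | WLForm.fuse a b => BForm.conj (trB a) (trB b)
  | WLForm.ldiv a b => BForm.imp (trB a) (trB b)

/-!
The translation `t` forgets the resource discipline of `WL`: fusion and conjunction both become
`∧`, and an antecedent is read as a multiset. Each `WL` rule thus becomes a `BPC` rule, up to
left and right weakening, which are admissible in `BPC`.
-/

namespace BPCfrom

variable {H : Set BForm}

theorem weakenLeft {U X : Multiset BForm} (C : BForm) (h : BPCfrom H U X) :
    BPCfrom H (C ::ₘ U) X := by
  induction h with
  | @hyp A hA => simpa using BPCfrom.cut (.hyp hA) (.id {C} 0 A)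
  | id => rw [Multiset.cons_swap]; exact .id _ _ _
  | topR => exact .topR _ _
  | botL => rw [Multiset.cons_swap]; exact .botL _ _
  | conjL _ ih =>
      rw [Multiset.cons_swap]
      exact .conjL (by rw [Multiset.cons_swap _ C, Multiset.cons_swap _ C]; exact ih)
  | conjR _ _ ih1 ih2 => exact .conjR ih1 ih2
  | disjL _ _ ih1 ih2 =>
      rw [Multiset.cons_swap]
      exact .disjL (by rw [Multiset.cons_swap]; exact ih1) (by rw [Multiset.cons_swap]; exact ih2)
  | disjR _ ih => exact .disjR ih
  | impR X _ ih => exact .impR X (by rw [Multiset.cons_swap]; exact ih)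
  | distr _ _ ih1 ih2 =>
      rw [Multiset.cons_swap]
      exact .distr (by rw [Multiset.cons_swap]; exact ih1) (by rw [Multiset.cons_swap]; exact ih2)
  | tran X _ _ ih1 ih2 => exact .tran X ih1 ih2
  | fconj X _ _ ih1 ih2 => exact .fconj X ih1 ih2
  | fdisj X _ _ ih1 ih2 => exact .fdisj X ih1 ih2
  | cut h1 _ _ ih2 =>
      rw [← Multiset.add_cons]
      exact .cut h1 (by rw [Multiset.cons_swap]; exact ih2)

theorem weakenLeft_add {U X : Multiset BForm} (V : Multiset BForm) (h : BPCfrom H U X) :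
    BPCfrom H (V + U) X := by
  induction V using Multiset.induction with
  | empty => simpa using h
  | cons C V ih => rw [Multiset.cons_add]; exact ih.weakenLeft C

theorem weakenRight {U X : Multiset BForm} (C : BForm) (h : BPCfrom H U X) :
    BPCfrom H U (C ::ₘ X) := by
  induction h with
  | @hyp A hA =>
      have h := BPCfrom.cut (.hyp hA) (.id 0 (C ::ₘ 0) A)
      rwa [zero_add, zero_add, Multiset.cons_swap] at h
  | id => rw [Multiset.cons_swap]; exact .id _ _ _
  | topR => rw [Multiset.cons_swap]; exact .topR _ _
  | botL => exact .botL _ _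
  | conjL _ ih => exact .conjL ih
  | conjR _ _ ih1 ih2 =>
      rw [Multiset.cons_swap]
      exact .conjR (by rw [Multiset.cons_swap]; exact ih1) (by rw [Multiset.cons_swap]; exact ih2)
  | disjL _ _ ih1 ih2 => exact .disjL ih1 ih2
  | disjR _ ih =>
      rw [Multiset.cons_swap]
      exact .disjR (by rw [Multiset.cons_swap _ C, Multiset.cons_swap _ C]; exact ih)
  | impR X h _ => rw [Multiset.cons_swap]; exact .impR _ h
  | distr _ _ ih1 ih2 => exact .distr ih1 ih2
  | tran X h1 h2 _ _ => rw [Multiset.cons_swap]; exact .tran _ h1 h2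
  | fconj X h1 h2 _ _ => rw [Multiset.cons_swap]; exact .fconj _ h1 h2
  | fdisj X h1 h2 _ _ => rw [Multiset.cons_swap]; exact .fdisj _ h1 h2
  | cut _ h2 ih1 _ =>
      rw [← Multiset.cons_add]
      exact .cut (by rw [Multiset.cons_swap]; exact ih1) h2

end BPCfrom

def trAntecedent (G : List WLForm) : Multiset BForm :=
  ((G.map trB : List BForm) : Multiset BForm)

abbrev trSuccedent : Option WLForm → Multiset BForm
  | none => 0
  | some A => {trB A}

theorem trAntecedent_append (X Y : List WLForm) :
    trAntecedent (X ++ Y) = trAntecedent X + trAntecedent Y := by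
  simp [trAntecedent]

theorem trAntecedent_cons (A : WLForm) (X : List WLForm) :
    trAntecedent (A :: X) = trB A ::ₘ trAntecedent X := by
  simp [trAntecedent]

theorem trAntecedent_middle (X Y : List WLForm) (A : WLForm) :
    trAntecedent (X ++ A :: Y) = trB A ::ₘ trAntecedent (X ++ Y) := by
  simp only [trAntecedent_append, trAntecedent_cons, Multiset.add_cons]

theorem trAntecedent_cut (X Y Z : List WLForm) :
    trAntecedent (Y ++ X ++ Z) = trAntecedent X + trAntecedent (Y ++ Z) := by
  simp only [trAntecedent_append]
  abel

theorem WL.toBPCfrom_trB {H : Set BForm} {G : List WLForm} {D : Option WLForm} (h : WL G D) :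
    BPCfrom H (trAntecedent G) (trSuccedent D) := by
  induction h with
  | id A => exact .id 0 0 (trB A)
  | botL => rw [trAntecedent_middle]; exact .botL _ _
  | oneR => exact .topR 0 0
  | cut _ _ ih1 ih2 =>
      rw [trAntecedent_middle] at ih2
      rw [trAntecedent_cut]
      simpa using BPCfrom.cut ih1 ih2
  | oneW _ ih => rw [trAntecedent_middle]; exact ih.weakenLeft _
  | conjL1 B _ ih =>
      rw [trAntecedent_middle] at ih ⊢
      exact .conjL (by rw [Multiset.cons_swap]; exact ih.weakenLeft (trB B))
  | conjL2 A _ ih =>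
      rw [trAntecedent_middle] at ih ⊢
      exact .conjL (ih.weakenLeft (trB A))
  | conjR _ _ ih1 ih2 => exact .conjR ih1 ih2
  | disjL _ _ ih1 ih2 =>
      rw [trAntecedent_middle] at ih1 ih2 ⊢
      exact .disjL ih1 ih2
  | disjR1 B _ ih =>
      exact .disjR (by rw [Multiset.cons_swap]; exact ih.weakenRight (trB B))
  | disjR2 A _ ih => exact .disjR (ih.weakenRight (trB A))
  | fuseL _ ih =>
      rw [trAntecedent_middle, trAntecedent_middle] at ih
      rw [trAntecedent_middle]
      exact .conjL ih
  | @fuseR X Y _ _ _ _ ih1 ih2 =>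
      rw [trAntecedent_append]
      exact .conjR (add_comm (trAntecedent Y) _ ▸ ih1.weakenLeft_add _) (ih2.weakenLeft_add _)
  | ldivR _ ih =>
      rw [trAntecedent_cons] at ih
      exact .impR 0 ih

theorem statement_6 (G : List WLForm) (A : WLForm) (h : WL G (some A)) :
    BPCfrom ∅ ((G.map trB : List BForm) : Multiset BForm) {trB A} :=
  h.toBPCfrom_trB
end

section
/- Modus ponens is admissible in BPC: if both sequents ⇒ φ and ⇒ φ → ψ are provable in BPC, then the sequent ⇒ ψ is provable in BPC. -/
namespace MPaux

lemma cast' {U U' X X' : Multiset BForm} (h : BPCfrom ∅ U X)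
    (hU : U = U') (hX : X = X') : BPCfrom ∅ U' X' := hU ▸ hX ▸ h

/-- Admissibility of weakening. -/
lemma wk {U X : Multiset BForm} (h : BPCfrom ∅ U X) :
    ∀ (V Y : Multiset BForm), BPCfrom ∅ (U + V) (X + Y) := by
  induction h with
  | hyp h => exact absurd h (Set.notMem_empty _)
  | id U X A =>
      intro V Y
      rw [Multiset.cons_add, Multiset.cons_add]
      exact BPCfrom.id _ _ _
  | topR U X =>
      intro V Y
      rw [Multiset.cons_add]
      exact BPCfrom.topR _ _
  | botL U X =>
      intro V Y
      rw [Multiset.cons_add]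
      exact BPCfrom.botL _ _
  | conjL h ih =>
      intro V Y
      rw [Multiset.cons_add]
      refine BPCfrom.conjL ?_
      have := ih V Y
      rwa [Multiset.cons_add, Multiset.cons_add] at this
  | conjR h1 h2 ih1 ih2 =>
      intro V Y
      rw [Multiset.cons_add]
      refine BPCfrom.conjR ?_ ?_
      · have := ih1 V Y; rwa [Multiset.cons_add] at this
      · have := ih2 V Y; rwa [Multiset.cons_add] at this
  | disjL h1 h2 ih1 ih2 =>
      intro V Y
      rw [Multiset.cons_add]
      refine BPCfrom.disjL ?_ ?_
      · have := ih1 V Y; rwa [Multiset.cons_add] at this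
      · have := ih2 V Y; rwa [Multiset.cons_add] at this
  | disjR h ih =>
      intro V Y
      rw [Multiset.cons_add]
      refine BPCfrom.disjR ?_
      have := ih V Y
      rwa [Multiset.cons_add, Multiset.cons_add] at this
  | impR X h ih =>
      intro V Y
      rw [Multiset.cons_add]
      refine BPCfrom.impR (X + Y) ?_
      have := ih V 0
      rwa [Multiset.cons_add, add_zero] at this
  | tran X h1 h2 ih1 ih2 =>
      intro V Y
      rw [Multiset.cons_add]
      have p1 := ih1 V 0
      rw [add_zero] at p1
      have p2 := ih2 V 0
      rw [add_zero] at p2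
      exact BPCfrom.tran (X + Y) p1 p2
  | fconj X h1 h2 ih1 ih2 =>
      intro V Y
      rw [Multiset.cons_add]
      have p1 := ih1 V 0
      rw [add_zero] at p1
      have p2 := ih2 V 0
      rw [add_zero] at p2
      exact BPCfrom.fconj (X + Y) p1 p2
  | fdisj X h1 h2 ih1 ih2 =>
      intro V Y
      rw [Multiset.cons_add]
      have p1 := ih1 V 0
      rw [add_zero] at p1
      have p2 := ih2 V 0
      rw [add_zero] at p2
      exact BPCfrom.fdisj (X + Y) p1 p2
  | distr h1 h2 ih1 ih2 =>
      intro V Y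
      rw [Multiset.cons_add]
      refine BPCfrom.distr ?_ ?_
      · have := ih1 V Y; rwa [Multiset.cons_add] at this
      · have := ih2 V Y; rwa [Multiset.cons_add] at this
  | cut h1 h2 ih1 ih2 =>
      intro V Y
      have p1 := ih1 V Y
      rw [Multiset.cons_add] at p1
      have p2 := ih2 0 0
      rw [add_zero, add_zero] at p2
      have c := BPCfrom.cut p1 p2
      refine cast' c (by abel) (by abel)

/-- Cut away hypotheses each of which is provable outright. -/
lemma cutAway {U : Multiset BForm} (hU : ∀ C ∈ U, BPCfrom ∅ 0 {C}) :
    ∀ {V X : Multiset BForm}, BPCfrom ∅ (V + U) X → BPCfrom ∅ V X := by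
  induction U using Multiset.induction with
  | empty => intro V X h; simpa using h
  | cons C U ih =>
      intro V X h
      have h1 : BPCfrom ∅ 0 (C ::ₘ 0) := hU C (Multiset.mem_cons_self _ _)
      have h2 : BPCfrom ∅ (C ::ₘ (V + U)) X :=
        cast' h (by rw [Multiset.add_cons]) rfl
      have c := BPCfrom.cut h1 h2
      exact ih (fun D hD => hU D (Multiset.mem_cons_of_mem hD)) (cast' c (by simp) (by simp))

/-- The Kleene slash. -/
def slash : BForm → Prop
  | .var n => BPCfrom ∅ 0 {BForm.var n}
  | .top => True
  | .bot => False
  | .conj A B => slash A ∧ slash B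
  | .disj A B => slash A ∨ slash B
  | .imp A B => BPCfrom ∅ 0 {BForm.imp A B} ∧ (slash A → slash B)

lemma slash_prov : ∀ {C : BForm}, slash C → BPCfrom ∅ 0 {C} := by
  intro C
  induction C with
  | var n => exact fun h => h
  | top => exact fun _ => BPCfrom.topR 0 0
  | bot => exact fun h => h.elim
  | conj A B ihA ihB =>
      rintro ⟨hA, hB⟩
      exact BPCfrom.conjR (ihA hA) (ihB hB)
  | disj A B ihA ihB =>
      rintro (hA | hB)
      · exact BPCfrom.disjR (cast' (wk (ihA hA) 0 {B}) (by simp)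
          (by rw [Multiset.singleton_add, ← Multiset.cons_zero B]))
      · exact BPCfrom.disjR (cast' (wk (ihB hB) 0 {A}) (by simp) (by
          rw [Multiset.singleton_add, ← Multiset.cons_zero A]
          exact Multiset.cons_swap B A 0))
  | imp A B _ _ => exact fun h => h.1

lemma main {U X : Multiset BForm} (h : BPCfrom ∅ U X) :
    (∀ C ∈ U, slash C) → ∃ C ∈ X, slash C := by
  induction h with
  | hyp h => exact absurd h (Set.notMem_empty _)
  | id U X A =>
      intro hU
      exact ⟨A, Multiset.mem_cons_self _ _, hU A (Multiset.mem_cons_self _ _)⟩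
  | topR U X => exact fun _ => ⟨BForm.top, Multiset.mem_cons_self _ _, trivial⟩
  | botL U X =>
      intro hU
      exact absurd (hU BForm.bot (Multiset.mem_cons_self _ _)) id
  | conjL h ih =>
      intro hU
      have hc : slash (BForm.conj _ _) := hU _ (Multiset.mem_cons_self _ _)
      refine ih ?_
      intro C hC
      rcases Multiset.mem_cons.1 hC with rfl | hC
      · exact hc.1
      rcases Multiset.mem_cons.1 hC with rfl | hC
      · exact hc.2
      · exact hU C (Multiset.mem_cons_of_mem hC)
  | conjR h1 h2 ih1 ih2 =>
      intro hU
      rcases ih1 hU with ⟨C, hC, sC⟩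
      rcases Multiset.mem_cons.1 hC with rfl | hC
      · rcases ih2 hU with ⟨D, hD, sD⟩
        rcases Multiset.mem_cons.1 hD with rfl | hD
        · exact ⟨_, Multiset.mem_cons_self _ _, ⟨sC, sD⟩⟩
        · exact ⟨D, Multiset.mem_cons_of_mem hD, sD⟩
      · exact ⟨C, Multiset.mem_cons_of_mem hC, sC⟩
  | disjL h1 h2 ih1 ih2 =>
      intro hU
      have hc : slash (BForm.disj _ _) := hU _ (Multiset.mem_cons_self _ _)
      rcases hc with sA | sB
      · refine ih1 ?_
        intro C hC
        rcases Multiset.mem_cons.1 hC with rfl | hC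
        · exact sA
        · exact hU C (Multiset.mem_cons_of_mem hC)
      · refine ih2 ?_
        intro C hC
        rcases Multiset.mem_cons.1 hC with rfl | hC
        · exact sB
        · exact hU C (Multiset.mem_cons_of_mem hC)
  | disjR h ih =>
      intro hU
      rcases ih hU with ⟨C, hC, sC⟩
      rcases Multiset.mem_cons.1 hC with rfl | hC
      · exact ⟨_, Multiset.mem_cons_self _ _, Or.inl sC⟩
      rcases Multiset.mem_cons.1 hC with rfl | hC
      · exact ⟨_, Multiset.mem_cons_self _ _, Or.inr sC⟩
      · exact ⟨C, Multiset.mem_cons_of_mem hC, sC⟩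
  | @impR U A B X h ih =>
      intro hU
      refine ⟨BForm.imp A B, Multiset.mem_cons_self _ _, ?_, ?_⟩
      · have hprov : ∀ C ∈ U, BPCfrom ∅ 0 {C} := fun C hC => slash_prov (hU C hC)
        have hAB : BPCfrom ∅ {A} {B} :=
          cutAway hprov (cast' h (Multiset.singleton_add A U).symm rfl)
        exact BPCfrom.impR 0 hAB
      · intro sA
        rcases ih (fun C hC => by
          rcases Multiset.mem_cons.1 hC with rfl | hC
          · exact sA
          · exact hU C hC) with ⟨D, hD, sD⟩
        rcases Multiset.mem_singleton.1 hD with rfl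
        exact sD
  | @tran U A B C X h1 h2 ih1 ih2 =>
      intro hU
      have hprov : ∀ D ∈ U, BPCfrom ∅ 0 {D} := fun D hD => slash_prov (hU D hD)
      refine ⟨BForm.imp A C, Multiset.mem_cons_self _ _, ?_, ?_⟩
      · have p1 : BPCfrom ∅ 0 {BForm.imp A B} := cutAway hprov (cast' h1 (by simp) rfl)
        have p2 : BPCfrom ∅ 0 {BForm.imp B C} := cutAway hprov (cast' h2 (by simp) rfl)
        exact BPCfrom.tran 0 p1 p2
      · intro sA
        rcases ih1 hU with ⟨D, hD, sD⟩
        rcases Multiset.mem_singleton.1 hD with rfl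
        rcases ih2 hU with ⟨E, hE, sE⟩
        rcases Multiset.mem_singleton.1 hE with rfl
        exact sE.2 (sD.2 sA)
  | @fconj U A B C X h1 h2 ih1 ih2 =>
      intro hU
      have hprov : ∀ D ∈ U, BPCfrom ∅ 0 {D} := fun D hD => slash_prov (hU D hD)
      refine ⟨_, Multiset.mem_cons_self _ _, ?_, ?_⟩
      · have p1 : BPCfrom ∅ 0 {BForm.imp A B} := cutAway hprov (cast' h1 (by simp) rfl)
        have p2 : BPCfrom ∅ 0 {BForm.imp A C} := cutAway hprov (cast' h2 (by simp) rfl)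
        exact BPCfrom.fconj 0 p1 p2
      · intro sA
        rcases ih1 hU with ⟨D, hD, sD⟩
        rcases Multiset.mem_singleton.1 hD with rfl
        rcases ih2 hU with ⟨E, hE, sE⟩
        rcases Multiset.mem_singleton.1 hE with rfl
        exact ⟨sD.2 sA, sE.2 sA⟩
  | @fdisj U A B C X h1 h2 ih1 ih2 =>
      intro hU
      have hprov : ∀ D ∈ U, BPCfrom ∅ 0 {D} := fun D hD => slash_prov (hU D hD)
      refine ⟨_, Multiset.mem_cons_self _ _, ?_, ?_⟩
      · have p1 : BPCfrom ∅ 0 {BForm.imp A C} := cutAway hprov (cast' h1 (by simp) rfl)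
        have p2 : BPCfrom ∅ 0 {BForm.imp B C} := cutAway hprov (cast' h2 (by simp) rfl)
        exact BPCfrom.fdisj 0 p1 p2
      · rintro (sA | sB)
        · rcases ih1 hU with ⟨D, hD, sD⟩
          rcases Multiset.mem_singleton.1 hD with rfl
          exact sD.2 sA
        · rcases ih2 hU with ⟨D, hD, sD⟩
          rcases Multiset.mem_singleton.1 hD with rfl
          exact sD.2 sB
  | distr h1 h2 ih1 ih2 =>
      intro hU
      have hc : slash (BForm.conj _ (BForm.disj _ _)) := hU _ (Multiset.mem_cons_self _ _)
      obtain ⟨sA, sBC⟩ := hc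
      rcases sBC with sB | sC
      · refine ih1 ?_
        intro D hD
        rcases Multiset.mem_cons.1 hD with rfl | hD
        · exact ⟨sA, sB⟩
        · exact hU D (Multiset.mem_cons_of_mem hD)
      · refine ih2 ?_
        intro D hD
        rcases Multiset.mem_cons.1 hD with rfl | hD
        · exact ⟨sA, sC⟩
        · exact hU D (Multiset.mem_cons_of_mem hD)
  | cut h1 h2 ih1 ih2 =>
      intro hU
      have hU1 : ∀ C ∈ _, slash C := fun C hC => hU C (Multiset.mem_add.2 (Or.inl hC))
      have hU2 : ∀ C ∈ _, slash C := fun C hC => hU C (Multiset.mem_add.2 (Or.inr hC))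
      rcases ih1 hU1 with ⟨C, hC, sC⟩
      rcases Multiset.mem_cons.1 hC with rfl | hC
      · rcases ih2 (fun D hD => by
          rcases Multiset.mem_cons.1 hD with rfl | hD
          · exact sC
          · exact hU2 D hD) with ⟨D, hD, sD⟩
        exact ⟨D, Multiset.mem_add.2 (Or.inr hD), sD⟩
      · exact ⟨C, Multiset.mem_add.2 (Or.inl hC), sC⟩

end MPaux

theorem statement_8 (A B : BForm)
    (h1 : BPCfrom ∅ 0 {A}) (h2 : BPCfrom ∅ 0 {BForm.imp A B}) :
    BPCfrom ∅ 0 {B} := by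
  have sA : MPaux.slash A := by
    rcases MPaux.main h1 (by simp) with ⟨C, hC, sC⟩
    rcases Multiset.mem_singleton.1 hC with rfl
    exact sC
  have sAB : MPaux.slash (BForm.imp A B) := by
    rcases MPaux.main h2 (by simp) with ⟨C, hC, sC⟩
    rcases Multiset.mem_singleton.1 hC with rfl
    exact sC
  exact MPaux.slash_prov (sAB.2 sA)
end

section
/- For every finite multiset Υ of formulas and every formula A over {∧, ∨, →, ⊤, ⊥}: if Υ ⊢_BPC A, then the sequent Υ ⇒ A is provable in BPC. -/
/-- Single-formula left weakening is admissible. -/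
lemma BPCfrom.wk1 {H : Set BForm} {V X : Multiset BForm} (γ : BForm)
    (d : BPCfrom H V X) : BPCfrom H (γ ::ₘ V) X := by
  induction d with
  | @hyp A ha =>
      have h := BPCfrom.cut (BPCfrom.hyp ha) (BPCfrom.id {γ} 0 A)
      simpa using h
  | id U X A =>
      rw [Multiset.cons_swap]; exact BPCfrom.id _ _ _
  | topR U X => exact BPCfrom.topR _ _
  | botL U X =>
      rw [Multiset.cons_swap]; exact BPCfrom.botL _ _
  | @conjL U X A B h ih =>
      rw [Multiset.cons_swap]
      apply BPCfrom.conjL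
      have e : (A ::ₘ B ::ₘ γ ::ₘ U) = (γ ::ₘ A ::ₘ B ::ₘ U) := by
        rw [Multiset.cons_swap B γ, Multiset.cons_swap A γ]
      rw [e]; exact ih
  | conjR h1 h2 ih1 ih2 => exact BPCfrom.conjR ih1 ih2
  | @disjL U X A B h1 h2 ih1 ih2 =>
      rw [Multiset.cons_swap]
      apply BPCfrom.disjL
      · rw [Multiset.cons_swap]; exact ih1
      · rw [Multiset.cons_swap]; exact ih2
  | disjR h ih => exact BPCfrom.disjR ih
  | @impR U A B X h ih =>
      apply BPCfrom.impR
      rw [Multiset.cons_swap]; exact ih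
  | @distr U X A B C h1 h2 ih1 ih2 =>
      rw [Multiset.cons_swap]
      apply BPCfrom.distr
      · rw [Multiset.cons_swap]; exact ih1
      · rw [Multiset.cons_swap]; exact ih2
  | tran X h1 h2 ih1 ih2 => exact BPCfrom.tran X ih1 ih2
  | fconj X h1 h2 ih1 ih2 => exact BPCfrom.fconj X ih1 ih2
  | fdisj X h1 h2 ih1 ih2 => exact BPCfrom.fdisj X ih1 ih2
  | @cut U1 U2 X1 X2 A h1 h2 ih1 ih2 =>
      have h := BPCfrom.cut ih1 h2
      rwa [Multiset.cons_add] at h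

/-- Left weakening by a multiset. -/
lemma BPCfrom.wk {H : Set BForm} {V X : Multiset BForm} (W : Multiset BForm)
    (d : BPCfrom H V X) : BPCfrom H (W + V) X := by
  induction W using Multiset.induction with
  | empty => simpa using d
  | cons a W ih => rw [Multiset.cons_add]; exact ih.wk1 a

/-- Single-formula left contraction is admissible (via cut with `γ ⇒ γ ∧ γ`). -/
lemma BPCfrom.ctr1 {H : Set BForm} {V X : Multiset BForm} {γ : BForm}
    (d : BPCfrom H (γ ::ₘ γ ::ₘ V) X) : BPCfrom H (γ ::ₘ V) X := by
  have h1 : BPCfrom H {γ} ((BForm.conj γ γ) ::ₘ 0) :=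
    BPCfrom.conjR (BPCfrom.id 0 0 γ) (BPCfrom.id 0 0 γ)
  have h2 : BPCfrom H ((BForm.conj γ γ) ::ₘ V) X := BPCfrom.conjL d
  have h := BPCfrom.cut h1 h2
  simpa using h

/-- Multiset left contraction. -/
lemma BPCfrom.ctr {H : Set BForm} {X : Multiset BForm} (W : Multiset BForm) :
    ∀ V : Multiset BForm, BPCfrom H (W + W + V) X → BPCfrom H (W + V) X := by
  induction W using Multiset.induction with
  | empty => intro V d; simpa using d
  | cons a W ih =>
      intro V d
      have e : (a ::ₘ W) + (a ::ₘ W) + V = a ::ₘ a ::ₘ (W + W + V) := by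
        simp [Multiset.cons_add, Multiset.add_cons, Multiset.cons_swap]
      rw [e] at d
      have d' := d.ctr1
      have e2 : a ::ₘ (W + W + V) = W + W + (a ::ₘ V) := by
        simp [Multiset.add_cons]
      rw [e2] at d'
      have := ih (a ::ₘ V) d'
      rwa [Multiset.add_cons, ← Multiset.cons_add] at this

lemma BPCfrom.absorb {H : Set BForm} {V X : Multiset BForm}
    (d : BPCfrom H V X) :
    ∀ W : Multiset BForm, (∀ a ∈ H, a ∈ W) → BPCfrom ∅ (W + V) X := by
  induction d with
  | @hyp A ha =>
      intro W hW
      obtain ⟨W', rfl⟩ := Multiset.exists_cons_of_mem (hW A ha)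
      have h : BPCfrom ∅ (A ::ₘ W') (A ::ₘ 0) := BPCfrom.id W' 0 A
      simpa using h
  | id U X A =>
      intro W hW
      rw [Multiset.add_cons]; exact BPCfrom.id _ _ _
  | topR U X => intro W hW; exact BPCfrom.topR _ _
  | botL U X =>
      intro W hW
      rw [Multiset.add_cons]; exact BPCfrom.botL _ _
  | @conjL U X A B h ih =>
      intro W hW
      rw [Multiset.add_cons]
      apply BPCfrom.conjL
      have := ih W hW
      rwa [Multiset.add_cons, Multiset.add_cons] at this
  | conjR h1 h2 ih1 ih2 =>
      intro W hW
      exact BPCfrom.conjR (ih1 W hW) (ih2 W hW)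
  | @disjL U X A B h1 h2 ih1 ih2 =>
      intro W hW
      rw [Multiset.add_cons]
      apply BPCfrom.disjL
      · have := ih1 W hW; rwa [Multiset.add_cons] at this
      · have := ih2 W hW; rwa [Multiset.add_cons] at this
  | disjR h ih => intro W hW; exact BPCfrom.disjR (ih W hW)
  | @impR U A B X h ih =>
      intro W hW
      apply BPCfrom.impR
      have := ih W hW; rwa [Multiset.add_cons] at this
  | @distr U X A B C h1 h2 ih1 ih2 =>
      intro W hW
      rw [Multiset.add_cons]
      apply BPCfrom.distr
      · have := ih1 W hW; rwa [Multiset.add_cons] at this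
      · have := ih2 W hW; rwa [Multiset.add_cons] at this
  | tran X h1 h2 ih1 ih2 =>
      intro W hW; exact BPCfrom.tran X (ih1 W hW) (ih2 W hW)
  | fconj X h1 h2 ih1 ih2 =>
      intro W hW; exact BPCfrom.fconj X (ih1 W hW) (ih2 W hW)
  | fdisj X h1 h2 ih1 ih2 =>
      intro W hW; exact BPCfrom.fdisj X (ih1 W hW) (ih2 W hW)
  | @cut U1 U2 X1 X2 A h1 h2 ih1 ih2 =>
      intro W hW
      have d1 := ih1 W hW
      have d2 := ih2 W hW
      rw [Multiset.add_cons] at d2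
      have h := BPCfrom.cut d1 d2
      have e : (W + U1) + (W + U2) = W + W + (U1 + U2) := by
        abel
      rw [e] at h
      exact BPCfrom.ctr W (U1 + U2) h

theorem statement_9 (U : Multiset BForm) (A : BForm)
    (h : BPCfrom {x | x ∈ U} 0 {A}) :
    BPCfrom ∅ U {A} := by
  have := h.absorb U (fun a ha => ha)
  simpa using this
end

section
/- Let L be a substructural logic and let P and Q be two Frege systems for L. Then there exists a constant c such that for every formula φ and every P-proof π of φ, there exists a Q-proof π' of φ with λ(π') ≤ c · λ(π). -/
inductive FLForm : Type
  | var : Nat → FLForm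
  | one : FLForm
  | zero : FLForm
  | conj : FLForm → FLForm → FLForm
  | disj : FLForm → FLForm → FLForm
  | fuse : FLForm → FLForm → FLForm
  | ldiv : FLForm → FLForm → FLForm
  | rdiv : FLForm → FLForm → FLForm
  deriving DecidableEq

/-- The sequent calculus `FL` augmented with the initial sequents `⇒ γ`, `γ ∈ H`.
`Υ ⊢_FL φ` is `FLfrom Υ [] (some φ)`.  `FLForm.rdiv B A` denotes `B / A`. -/
inductive FLfrom (H : Set FLForm) : List FLForm → Option FLForm → Prop
  | hyp {A : FLForm} : A ∈ H → FLfrom H [] (some A)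
  | id (A : FLForm) : FLfrom H [A] (some A)
  | oneR : FLfrom H [] (some FLForm.one)
  | zeroL : FLfrom H [FLForm.zero] none
  | cut {X Y Z : List FLForm} {D : Option FLForm} {A : FLForm} :
      FLfrom H X (some A) → FLfrom H (Y ++ A :: Z) D → FLfrom H (Y ++ X ++ Z) D
  | oneW {X Y : List FLForm} {D : Option FLForm} :
      FLfrom H (X ++ Y) D → FLfrom H (X ++ FLForm.one :: Y) D
  | zeroW {X : List FLForm} : FLfrom H X none → FLfrom H X (some FLForm.zero)
  | conjL1 {X Y : List FLForm} {D : Option FLForm} {A : FLForm} (B : FLForm) :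
      FLfrom H (X ++ A :: Y) D → FLfrom H (X ++ FLForm.conj A B :: Y) D
  | conjL2 {X Y : List FLForm} {D : Option FLForm} {B : FLForm} (A : FLForm) :
      FLfrom H (X ++ B :: Y) D → FLfrom H (X ++ FLForm.conj A B :: Y) D
  | conjR {X : List FLForm} {A B : FLForm} :
      FLfrom H X (some A) → FLfrom H X (some B) → FLfrom H X (some (FLForm.conj A B))
  | disjL {X Y : List FLForm} {D : Option FLForm} {A B : FLForm} :
      FLfrom H (X ++ A :: Y) D → FLfrom H (X ++ B :: Y) D →
      FLfrom H (X ++ FLForm.disj A B :: Y) D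
  | disjR1 {X : List FLForm} {A : FLForm} (B : FLForm) :
      FLfrom H X (some A) → FLfrom H X (some (FLForm.disj A B))
  | disjR2 {X : List FLForm} {B : FLForm} (A : FLForm) :
      FLfrom H X (some B) → FLfrom H X (some (FLForm.disj A B))
  | fuseL {X Y : List FLForm} {D : Option FLForm} {A B : FLForm} :
      FLfrom H (X ++ A :: B :: Y) D → FLfrom H (X ++ FLForm.fuse A B :: Y) D
  | fuseR {X Y : List FLForm} {A B : FLForm} :
      FLfrom H X (some A) → FLfrom H Y (some B) → FLfrom H (X ++ Y) (some (FLForm.fuse A B))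
  | ldivL {X Y Z : List FLForm} {D : Option FLForm} {A B : FLForm} :
      FLfrom H X (some A) → FLfrom H (Y ++ B :: Z) D →
      FLfrom H (Y ++ X ++ FLForm.ldiv A B :: Z) D
  | ldivR {X : List FLForm} {A B : FLForm} :
      FLfrom H (A :: X) (some B) → FLfrom H X (some (FLForm.ldiv A B))
  | rdivL {X Y Z : List FLForm} {D : Option FLForm} {A B : FLForm} :
      FLfrom H X (some A) → FLfrom H (Y ++ B :: Z) D →
      FLfrom H (Y ++ FLForm.rdiv B A :: (X ++ Z)) D
  | rdivR {X : List FLForm} {A B : FLForm} :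
      FLfrom H (X ++ [A]) (some B) → FLfrom H X (some (FLForm.rdiv B A))

def FLForm.subst (f : Nat → FLForm) : FLForm → FLForm
  | FLForm.var n => f n
  | FLForm.one => FLForm.one
  | FLForm.zero => FLForm.zero
  | FLForm.conj a b => FLForm.conj (a.subst f) (b.subst f)
  | FLForm.disj a b => FLForm.disj (a.subst f) (b.subst f)
  | FLForm.fuse a b => FLForm.fuse (a.subst f) (b.subst f)
  | FLForm.ldiv a b => FLForm.ldiv (a.subst f) (b.subst f)
  | FLForm.rdiv a b => FLForm.rdiv (a.subst f) (b.subst f)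

/-- A substructural logic over `FL`: a set of `L*`-formulas containing all
`FL`-provable formulas, closed under substitution and under `⊢_FL`. -/
structure IsSubstructural (L : Set FLForm) : Prop where
  flSub : ∀ A : FLForm, FLfrom ∅ [] (some A) → A ∈ L
  substClosed : ∀ (f : Nat → FLForm), ∀ A ∈ L, FLForm.subst f A ∈ L
  derClosed : ∀ A : FLForm, FLfrom L [] (some A) → A ∈ L

/-- `π` is a (dag-like) derivation over the step relation `Step` from the
hypotheses `Hyp`: every line is a hypothesis or follows from earlier lines by an
instance of `Step`.  The number of proof-lines `λ(π)` is `π.length`. -/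
def IsDeriv {σ : Type} (Step : List σ → σ → Prop) (Hyp : Set σ) (π : List σ) : Prop :=
  ∀ i : Fin π.length, π.get i ∈ Hyp ∨
    ∃ prems : List σ, Step prems (π.get i) ∧
      ∀ p ∈ prems, ∃ j : Fin π.length, (j : Nat) < (i : Nat) ∧ π.get j = p

abbrev FLRule : Type := List FLForm × FLForm

def FLRuleStep (rules : List FLRule) (prems : List FLForm) (conc : FLForm) : Prop :=
  ∃ r ∈ rules, ∃ f : Nat → FLForm, prems = r.1.map (FLForm.subst f) ∧ conc = FLForm.subst f r.2

/-- `π` is a proof of `A` from hypotheses `H` in the inference system given by `rules`;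
`λ(π) = π.length`. -/
def FLFregeProof (rules : List FLRule) (H : Set FLForm) (π : List FLForm) (A : FLForm) : Prop :=
  IsDeriv (FLRuleStep rules) H π ∧ π.getLast? = some A

/-- `rules` is a Frege system for the substructural logic `L` (with respect to `L`
itself): finitely many rules, sound, strongly complete, and every rule is
`L`-standard, where `Υ ⊢_L φ` is `Υ ∪ L ⊢_FL φ`. -/
structure IsFregeFor (L : Set FLForm) (rules : List FLRule) : Prop where
  sound : ∀ A : FLForm, (∃ π : List FLForm, FLFregeProof rules ∅ π A) → A ∈ L
  complete : ∀ (G : List FLForm) (A : FLForm),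
    FLfrom ({x | x ∈ G} ∪ L) [] (some A) →
    ∃ π : List FLForm, FLFregeProof rules {x | x ∈ G} π A
  standard : ∀ r ∈ rules, FLfrom ({x | x ∈ r.1} ∪ L) [] (some r.2)

/-! Every rule of `P` is `L`-standard, so by strong completeness of `Q` its conclusion has a
`Q`-proof from its premises. Substitution instances of these finitely many `Q`-proofs, each of
length at most some `K`, replace the lines of a `P`-proof one at a time; the resulting
`Q`-derivation contains every line of the `P`-proof and is cut off right after the conclusion. -/

section IsDeriv

variable {σ : Type} {S : List σ → σ → Prop} {H : Set σ}

theorem isDeriv_iff_getElem {π : List σ} :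
    IsDeriv S H π ↔ ∀ i (hi : i < π.length),
      π[i] ∈ H ∨ ∃ prems, S prems π[i] ∧ ∀ p ∈ prems, p ∈ π.take i := by
  simp only [IsDeriv, Fin.forall_iff, List.get_eq_getElem, Fin.exists_iff,
    List.mem_take_iff_getElem]
  refine forall₂_congr fun i hi => or_congr_right <| exists_congr fun prems =>
    and_congr_right fun _ => forall₂_congr fun p _ => ?_
  constructor
  · rintro ⟨j, hj, hji, rfl⟩
    exact ⟨j, by omega, rfl⟩
  · rintro ⟨j, hj, rfl⟩
    exact ⟨j, by omega, by omega, rfl⟩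

theorem isDeriv_nil : IsDeriv S H [] := fun i => i.elim0

theorem isDeriv_append_singleton_iff {π : List σ} {x : σ} :
    IsDeriv S H (π ++ [x]) ↔
      IsDeriv S H π ∧ (x ∈ H ∨ ∃ prems, S prems x ∧ ∀ p ∈ prems, p ∈ π) := by
  rw [isDeriv_iff_getElem, isDeriv_iff_getElem]
  constructor
  · intro h
    refine ⟨fun i hi => ?_, ?_⟩
    · have := h i (by rw [List.length_append, List.length_singleton]; omega)
      rwa [List.getElem_append_left hi, List.take_append_of_le_length hi.le] at this
    · simpa using h π.length (by simp)
  · rintro ⟨h, hx⟩ i hi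
    obtain hi | rfl : i < π.length ∨ i = π.length := by
      rw [List.length_append, List.length_singleton] at hi; omega
    · simpa [List.getElem_append_left hi, List.take_append_of_le_length hi.le] using h i hi
    · simpa using hx

theorem IsDeriv.of_append {π ρ : List σ} (h : IsDeriv S H (π ++ ρ)) : IsDeriv S H π := by
  induction ρ using List.reverseRecOn with
  | nil => simpa using h
  | append_singleton ρ x ih =>
    rw [← List.append_assoc] at h
    exact ih (isDeriv_append_singleton_iff.mp h).1

theorem IsDeriv.append_singleton_of_mem {π : List σ} {x : σ} (h : IsDeriv S H π)
    (hx : x ∈ π) : IsDeriv S H (π ++ [x]) := by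
  obtain ⟨π₁, π₂, rfl⟩ := List.append_of_mem hx
  have hprefix : IsDeriv S H (π₁ ++ [x]) := IsDeriv.of_append (ρ := π₂) (by simpa using h)
  refine isDeriv_append_singleton_iff.mpr ⟨h, ?_⟩
  refine (isDeriv_append_singleton_iff.mp hprefix).2.imp_right fun ⟨prems, hs, hp⟩ => ?_
  exact ⟨prems, hs, fun p hp' => List.mem_append_left _ (hp p hp')⟩

theorem IsDeriv.append {π ρ : List σ} {H' : Set σ} (hπ : IsDeriv S H π)
    (hρ : IsDeriv S H' ρ) (hH' : ∀ x ∈ H', x ∈ π) : IsDeriv S H (π ++ ρ) := by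
  induction ρ using List.reverseRecOn with
  | nil => simpa using hπ
  | append_singleton ρ x ih =>
    obtain ⟨hρ, hx⟩ := isDeriv_append_singleton_iff.mp hρ
    rw [← List.append_assoc]
    rcases hx with hx | ⟨prems, hs, hp⟩
    · exact (ih hρ).append_singleton_of_mem (List.mem_append_left _ (hH' x hx))
    · exact isDeriv_append_singleton_iff.mpr
        ⟨ih hρ, Or.inr ⟨prems, hs, fun p hp' => List.mem_append_right _ (hp p hp')⟩⟩

theorem IsDeriv.map {τ : Type} {T : List τ → τ → Prop} (g : σ → τ)
    (hg : ∀ prems x, S prems x → T (prems.map g) (g x)) {π : List σ} (h : IsDeriv S H π) :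
    IsDeriv T (g '' H) (π.map g) := by
  induction π using List.reverseRecOn with
  | nil => exact isDeriv_nil
  | append_singleton π x ih =>
    obtain ⟨hπ, hx⟩ := isDeriv_append_singleton_iff.mp h
    rw [List.map_append, List.map_singleton]
    refine isDeriv_append_singleton_iff.mpr ⟨ih hπ, ?_⟩
    rcases hx with hx | ⟨prems, hs, hp⟩
    · exact Or.inl (Set.mem_image_of_mem g hx)
    · refine Or.inr ⟨prems.map g, hg _ _ hs, ?_⟩
      intro p hp'
      obtain ⟨q, hq, rfl⟩ := List.mem_map.mp hp'
      exact List.mem_map_of_mem (hp q hq)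

theorem IsDeriv.exists_getLast?_eq {π : List σ} {x : σ} (h : IsDeriv S H π) (hx : x ∈ π) :
    ∃ π' : List σ, IsDeriv S H π' ∧ π'.getLast? = some x ∧ π'.length ≤ π.length := by
  obtain ⟨π₁, π₂, rfl⟩ := List.append_of_mem hx
  exact ⟨π₁ ++ [x], IsDeriv.of_append (ρ := π₂) (by simpa using h), by simp, by simp⟩

end IsDeriv

theorem exists_forall_exists_length_le {α β : Type} {p : α → List β → Prop} (l : List α)
    (h : ∀ a ∈ l, ∃ π, p a π) : ∃ K, ∀ a ∈ l, ∃ π, p a π ∧ π.length ≤ K := by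
  induction l with
  | nil => exact ⟨0, by simp⟩
  | cons a l ih =>
    obtain ⟨π, hπ⟩ := h a List.mem_cons_self
    obtain ⟨K, hK⟩ := ih fun b hb => h b (List.mem_cons_of_mem a hb)
    refine ⟨max π.length K, ?_⟩
    simp only [List.mem_cons, forall_eq_or_imp]
    exact ⟨⟨π, hπ, le_max_left _ _⟩,
      fun b hb => (hK b hb).imp fun ρ hρ => ⟨hρ.1, hρ.2.trans (le_max_right _ _)⟩⟩

theorem FLForm.subst_subst (f g : Nat → FLForm) (A : FLForm) :
    (A.subst g).subst f = A.subst fun n => (g n).subst f := by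
  induction A <;> simp [FLForm.subst, *]

theorem FLRuleStep.subst {R : List FLRule} (f : Nat → FLForm) {prems : List FLForm}
    {A : FLForm} (h : FLRuleStep R prems A) :
    FLRuleStep R (prems.map (FLForm.subst f)) (A.subst f) := by
  obtain ⟨r, hr, g, rfl, rfl⟩ := h
  exact ⟨r, hr, fun n => (g n).subst f, by simp [Function.comp_def, FLForm.subst_subst],
    FLForm.subst_subst f g r.2⟩

theorem IsDeriv.simulate {P Q : List FLRule} {H : Set FLForm} {K : ℕ}
    (hPQ : ∀ r ∈ P, ∃ ρ, FLFregeProof Q {x | x ∈ r.1} ρ r.2 ∧ ρ.length ≤ K)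
    {π : List FLForm} (hπ : IsDeriv (FLRuleStep P) H π) :
    ∃ ρ, IsDeriv (FLRuleStep Q) H ρ ∧ (∀ x ∈ π, x ∈ ρ) ∧
      ρ.length ≤ (K + 1) * π.length := by
  induction π using List.reverseRecOn with
  | nil => exact ⟨[], isDeriv_nil, by simp, by simp⟩
  | append_singleton π x ih =>
    obtain ⟨hπ, hx⟩ := isDeriv_append_singleton_iff.mp hπ
    obtain ⟨B, hB, hπB, hlen⟩ := ih hπ
    simp only [List.mem_append, List.mem_singleton, List.length_append, List.length_singleton]
    rcases hx with hx | ⟨prems, ⟨r, hr, f, rfl, rfl⟩, hprems⟩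
    · refine ⟨B ++ [x], isDeriv_append_singleton_iff.mpr ⟨hB, Or.inl hx⟩, ?_, ?_⟩
      · rintro y (hy | rfl)
        · exact List.mem_append_left _ (hπB y hy)
        · exact List.mem_append_right _ (List.mem_singleton_self y)
      · simp only [List.length_append, List.length_singleton]
        nlinarith
    · obtain ⟨ρ, ⟨hρ, hconc⟩, hρlen⟩ := hPQ r hr
      have hinst := hρ.map _ fun _ _ => FLRuleStep.subst f
      refine ⟨B ++ ρ.map (FLForm.subst f), hB.append hinst ?_, ?_, ?_⟩
      · rintro _ ⟨y, hy, rfl⟩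
        exact hπB _ (hprems _ (List.mem_map_of_mem hy))
      · rintro y (hy | rfl)
        · exact List.mem_append_left _ (hπB y hy)
        · exact List.mem_append_right _ (List.mem_map_of_mem (List.mem_of_getLast? hconc))
      · simp only [List.length_append, List.length_map]
        nlinarith

theorem exists_linear_simulation_of_derives_rules {P Q : List FLRule}
    (hPQ : ∀ r ∈ P, ∃ ρ, FLFregeProof Q {x | x ∈ r.1} ρ r.2) :
    ∃ c : ℕ, ∀ (H : Set FLForm) (A : FLForm) (π : List FLForm), FLFregeProof P H π A →
      ∃ π', FLFregeProof Q H π' A ∧ π'.length ≤ c * π.length := by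
  obtain ⟨K, hK⟩ := exists_forall_exists_length_le P hPQ
  refine ⟨K + 1, fun H A π hπ => ?_⟩
  obtain ⟨B, hB, hπB, hlen⟩ := hπ.1.simulate hK
  obtain ⟨π', hπ', hlast, hlen'⟩ :=
    hB.exists_getLast?_eq (hπB A (List.mem_of_getLast? hπ.2))
  exact ⟨π', ⟨hπ', hlast⟩, hlen'.trans hlen⟩

theorem statement_11_general (L : Set FLForm)
    (P Q : List FLRule) (hP : IsFregeFor L P) (hQ : IsFregeFor L Q) :
    ∃ c : Nat, ∀ (A : FLForm) (π : List FLForm), FLFregeProof P ∅ π A →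
      ∃ πp : List FLForm, FLFregeProof Q ∅ πp A ∧ πp.length ≤ c * π.length := by
  obtain ⟨c, hc⟩ := exists_linear_simulation_of_derives_rules fun r hr =>
    hQ.complete r.1 r.2 (hP.standard r hr)
  exact ⟨c, hc ∅⟩

theorem statement_11 (L : Set FLForm) (hL : IsSubstructural L)
    (P Q : List FLRule) (hP : IsFregeFor L P) (hQ : IsFregeFor L Q) :
    ∃ c : Nat, ∀ (A : FLForm) (π : List FLForm), FLFregeProof P ∅ π A →
      ∃ πp : List FLForm, FLFregeProof Q ∅ πp A ∧ πp.length ≤ c * π.length :=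
  statement_11_general L P Q hP hQ
end

section
/- If Γ is a finite sequence of 0-free formulas over {∧, ∨, *, →, 0, 1}, then the sequent Γ ⇒ (with empty succedent) is not provable in CFL_ew^- (the cut-free version of CFL_ew). -/
inductive EForm : Type
  | var : Nat → EForm
  | one : EForm
  | zero : EForm
  | conj : EForm → EForm → EForm
  | disj : EForm → EForm → EForm
  | fuse : EForm → EForm → EForm
  | imp : EForm → EForm → EForm
  deriving DecidableEq

/-- A formula over `{∧, ∨, *, →, 0, 1}` is `0`-free if it contains no occurrence
of the constant `0`. -/
def EForm.zeroFree : EForm → Prop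
  | EForm.var _ => True
  | EForm.one => True
  | EForm.zero => False
  | EForm.conj a b => a.zeroFree ∧ b.zeroFree
  | EForm.disj a b => a.zeroFree ∧ b.zeroFree
  | EForm.fuse a b => a.zeroFree ∧ b.zeroFree
  | EForm.imp a b => a.zeroFree ∧ b.zeroFree

/-- The cut-free multi-conclusion sequent calculus `CFL_S^-` over
`{∧, ∨, *, →, 0, 1}`, where `S = {e}` if `wk = false` and `S = {e, i, o}`
(i.e. `CFL_ew^-`) if `wk = true`.  Exchange on both sides is always present;
weakening on both sides is guarded by `wk`.  There is no cut rule. -/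
inductive CFLcf (wk : Bool) : List EForm → List EForm → Prop
  | id (A : EForm) : CFLcf wk [A] [A]
  | oneR : CFLcf wk [] [EForm.one]
  | zeroL : CFLcf wk [EForm.zero] []
  | exL {X Y D : List EForm} {A B : EForm} :
      CFLcf wk (X ++ A :: B :: Y) D → CFLcf wk (X ++ B :: A :: Y) D
  | exR {G X Y : List EForm} {A B : EForm} :
      CFLcf wk G (X ++ A :: B :: Y) → CFLcf wk G (X ++ B :: A :: Y)
  | wkL (h : wk = true) {X Y D : List EForm} (A : EForm) :
      CFLcf wk (X ++ Y) D → CFLcf wk (X ++ A :: Y) D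
  | wkR (h : wk = true) {G X Y : List EForm} (A : EForm) :
      CFLcf wk G (X ++ Y) → CFLcf wk G (X ++ A :: Y)
  | oneW {X Y D : List EForm} :
      CFLcf wk (X ++ Y) D → CFLcf wk (X ++ EForm.one :: Y) D
  | zeroW {G X Y : List EForm} :
      CFLcf wk G (X ++ Y) → CFLcf wk G (X ++ EForm.zero :: Y)
  | conjL1 {X Y D : List EForm} {A : EForm} (B : EForm) :
      CFLcf wk (X ++ A :: Y) D → CFLcf wk (X ++ EForm.conj A B :: Y) D
  | conjL2 {X Y D : List EForm} {B : EForm} (A : EForm) :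
      CFLcf wk (X ++ B :: Y) D → CFLcf wk (X ++ EForm.conj A B :: Y) D
  | conjR {G X Y : List EForm} {A B : EForm} :
      CFLcf wk G (X ++ A :: Y) → CFLcf wk G (X ++ B :: Y) → CFLcf wk G (X ++ EForm.conj A B :: Y)
  | disjL {X Y D : List EForm} {A B : EForm} :
      CFLcf wk (X ++ A :: Y) D → CFLcf wk (X ++ B :: Y) D → CFLcf wk (X ++ EForm.disj A B :: Y) D
  | disjR1 {G X Y : List EForm} {A : EForm} (B : EForm) :
      CFLcf wk G (X ++ A :: Y) → CFLcf wk G (X ++ EForm.disj A B :: Y)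
  | disjR2 {G X Y : List EForm} {B : EForm} (A : EForm) :
      CFLcf wk G (X ++ B :: Y) → CFLcf wk G (X ++ EForm.disj A B :: Y)
  | fuseL {X Y D : List EForm} {A B : EForm} :
      CFLcf wk (X ++ A :: B :: Y) D → CFLcf wk (X ++ EForm.fuse A B :: Y) D
  | fuseR {G1 G2 X Y : List EForm} {A B : EForm} :
      CFLcf wk G1 (X ++ A :: Y) → CFLcf wk G2 (X ++ B :: Y) →
      CFLcf wk (G1 ++ G2) (X ++ EForm.fuse A B :: Y)
  | impL {G P X D L : List EForm} {A B : EForm} :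
      CFLcf wk G (A :: L) → CFLcf wk (P ++ B :: X) D →
      CFLcf wk (P ++ G ++ EForm.imp A B :: X) (D ++ L)
  | impR {G D : List EForm} {A B : EForm} :
      CFLcf wk (A :: G) (B :: D) → CFLcf wk G (EForm.imp A B :: D)


def EForm.ev : EForm → Prop
  | EForm.var _ => True
  | EForm.one => True
  | EForm.zero => False
  | EForm.conj a b => a.ev ∧ b.ev
  | EForm.disj a b => a.ev ∨ b.ev
  | EForm.fuse a b => a.ev ∧ b.ev
  | EForm.imp a b => a.ev → b.ev

lemma EForm.zf_ev : ∀ A : EForm, A.zeroFree → A.ev := by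
  intro A
  induction A <;> simp_all [EForm.zeroFree, EForm.ev]

lemma memsplit {X Y : List EForm} {F A : EForm}
    (hG : ∀ C ∈ X ++ F :: Y, C.ev) (hA : A.ev) : ∀ C ∈ X ++ A :: Y, C.ev := by
  intro C hC
  simp only [List.mem_append, List.mem_cons] at hC
  rcases hC with h | h | h
  · exact hG C (by simp [h])
  · subst h; exact hA
  · exact hG C (by simp [h])

lemma memsplit2 {X Y : List EForm} {F A B : EForm}
    (hG : ∀ C ∈ X ++ F :: Y, C.ev) (hA : A.ev) (hB : B.ev) :
    ∀ C ∈ X ++ A :: B :: Y, C.ev := by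
  intro C hC
  simp only [List.mem_append, List.mem_cons] at hC
  rcases hC with h | h | h | h
  · exact hG C (by simp [h])
  · subst h; exact hA
  · subst h; exact hB
  · exact hG C (by simp [h])

lemma memswap {X Y : List EForm} {A B : EForm}
    (hG : ∀ C ∈ X ++ B :: A :: Y, C.ev) : ∀ C ∈ X ++ A :: B :: Y, C.ev := by
  intro C hC; apply hG; simp only [List.mem_append, List.mem_cons] at hC ⊢; tauto

lemma memdrop {X Y : List EForm} {F : EForm}
    (hG : ∀ C ∈ X ++ F :: Y, C.ev) : ∀ C ∈ X ++ Y, C.ev := by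
  intro C hC; apply hG; simp only [List.mem_append, List.mem_cons] at hC ⊢; tauto

lemma exsplit {X Y : List EForm} {A F : EForm}
    (h : ∃ C ∈ X ++ A :: Y, C.ev) (hF : A.ev → F.ev) : ∃ C ∈ X ++ F :: Y, C.ev := by
  obtain ⟨C, hC, he⟩ := h
  simp only [List.mem_append, List.mem_cons] at hC
  rcases hC with h | h | h
  · exact ⟨C, by simp [h], he⟩
  · subst h; exact ⟨F, by simp, hF he⟩
  · exact ⟨C, by simp [h], he⟩

lemma exweak {X Y : List EForm} {F : EForm}
    (h : ∃ C ∈ X ++ Y, C.ev) : ∃ C ∈ X ++ F :: Y, C.ev := by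
  obtain ⟨C, hC, he⟩ := h
  exact ⟨C, by simp only [List.mem_append, List.mem_cons] at hC ⊢; tauto, he⟩

lemma exswap {X Y : List EForm} {A B : EForm}
    (h : ∃ C ∈ X ++ A :: B :: Y, C.ev) : ∃ C ∈ X ++ B :: A :: Y, C.ev := by
  obtain ⟨C, hC, he⟩ := h
  exact ⟨C, by simp only [List.mem_append, List.mem_cons] at hC ⊢; tauto, he⟩

lemma CFLcf.sound {wk : Bool} {G D : List EForm} (h : CFLcf wk G D)
    (hG : ∀ A ∈ G, A.ev) : ∃ B ∈ D, B.ev := by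
  induction h with
  | id A => exact ⟨A, by simp, hG A (by simp)⟩
  | oneR => exact ⟨EForm.one, by simp, trivial⟩
  | zeroL => exact absurd (hG EForm.zero (by simp)) (by simp [EForm.ev])
  | exL _ ih => exact ih (memswap hG)
  | exR _ ih => exact exswap (ih hG)
  | wkL _ A _ ih => exact ih (memdrop hG)
  | wkR _ A _ ih => exact exweak (ih hG)
  | oneW _ ih => exact ih (memdrop hG)
  | zeroW _ ih => exact exweak (ih hG)
  | @conjL1 X Y D A B _ ih =>
      have hc := hG (EForm.conj A B) (by simp)
      simp only [EForm.ev] at hc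
      exact ih (memsplit hG hc.1)
  | @conjL2 X Y D B A _ ih =>
      have hc := hG (EForm.conj A B) (by simp)
      simp only [EForm.ev] at hc
      exact ih (memsplit hG hc.2)
  | @conjR G X Y A B _ _ ih1 ih2 =>
      obtain ⟨C1, hC1, he1⟩ := ih1 hG
      simp only [List.mem_append, List.mem_cons] at hC1
      rcases hC1 with h | h | h
      · exact ⟨C1, by simp [h], he1⟩
      · subst h
        obtain ⟨C2, hC2, he2⟩ := ih2 hG
        simp only [List.mem_append, List.mem_cons] at hC2
        rcases hC2 with h | h | h
        · exact ⟨C2, by simp [h], he2⟩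
        · subst h
          refine ⟨EForm.conj C1 C2, by simp, ?_⟩
          simp only [EForm.ev]; exact ⟨he1, he2⟩
        · exact ⟨C2, by simp [h], he2⟩
      · exact ⟨C1, by simp [h], he1⟩
  | @disjL X Y D A B _ _ ih1 ih2 =>
      have hd := hG (EForm.disj A B) (by simp)
      simp only [EForm.ev] at hd
      rcases hd with h | h
      · exact ih1 (memsplit hG h)
      · exact ih2 (memsplit hG h)
  | @disjR1 G X Y A B _ ih =>
      exact exsplit (ih hG) (fun h => by simp only [EForm.ev]; exact Or.inl h)
  | @disjR2 G X Y B A _ ih =>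
      exact exsplit (ih hG) (fun h => by simp only [EForm.ev]; exact Or.inr h)
  | @fuseL X Y D A B _ ih =>
      have hf := hG (EForm.fuse A B) (by simp)
      simp only [EForm.ev] at hf
      exact ih (memsplit2 hG hf.1 hf.2)
  | @fuseR G1 G2 X Y A B _ _ ih1 ih2 =>
      obtain ⟨C1, hC1, he1⟩ := ih1 (fun C hC => hG C (by simp [hC]))
      simp only [List.mem_append, List.mem_cons] at hC1
      rcases hC1 with h | h | h
      · exact ⟨C1, by simp [h], he1⟩
      · subst h
        obtain ⟨C2, hC2, he2⟩ := ih2 (fun C hC => hG C (by simp [hC]))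
        simp only [List.mem_append, List.mem_cons] at hC2
        rcases hC2 with h | h | h
        · exact ⟨C2, by simp [h], he2⟩
        · subst h
          refine ⟨EForm.fuse C1 C2, by simp, ?_⟩
          simp only [EForm.ev]; exact ⟨he1, he2⟩
        · exact ⟨C2, by simp [h], he2⟩
      · exact ⟨C1, by simp [h], he1⟩
  | @impL G P X D L A B _ _ ih1 ih2 =>
      have him := hG (EForm.imp A B) (by simp)
      simp only [EForm.ev] at him
      obtain ⟨C, hC, he⟩ := ih1 (fun C hC => hG C (by simp [hC]))
      simp only [List.mem_cons] at hC
      rcases hC with h | h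
      · subst h
        have hP : ∀ E ∈ P ++ B :: X, E.ev := by
          intro E hE
          simp only [List.mem_append, List.mem_cons] at hE
          rcases hE with h | h | h
          · exact hG E (by simp [h])
          · subst h; exact him he
          · exact hG E (by simp [h])
        obtain ⟨C2, hC2, he2⟩ := ih2 hP
        exact ⟨C2, by simp [hC2], he2⟩
      · exact ⟨C, by simp [h], he⟩
  | @impR G D A B _ ih =>
      by_cases hA : A.ev
      · obtain ⟨C, hC, he⟩ := ih (by
          intro E hE
          simp only [List.mem_cons] at hE
          rcases hE with h | h
          · subst h; exact hA
          · exact hG E h)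
        simp only [List.mem_cons] at hC
        rcases hC with h | h
        · subst h
          exact ⟨EForm.imp A C, by simp, fun _ => he⟩
        · exact ⟨C, by simp [h], he⟩
      · refine ⟨EForm.imp A B, by simp, ?_⟩
        simp only [EForm.ev]
        exact fun h => absurd h hA

theorem statement_13 (G : List EForm) (hG : ∀ A ∈ G, A.zeroFree) :
    ¬ CFLcf true G [] := by
  intro h
  obtain ⟨B, hB, _⟩ := h.sound (fun A hA => (A.zf_ev (hG A hA)))
  simp at hB
end

section
/- Suppose Γ is a finite sequence of 0-free formulas and A is a 0-free formula over {∧, ∨, *, →, 0, 1}. If the single-conclusion sequent Γ ⇒ A is provable in CFL_ew^-, then Γ ⇒ A is provable in the single-conclusion sequent calculus FL_ew; indeed, every CFL_ew^--proof of Γ ⇒ A is itself an FL_ew-proof. -/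
/-- The single-conclusion sequent calculus `FL_ew` over `{∧, ∨, *, →, 0, 1}`:
exchange, left and right weakening, cut, and the single-conclusion logical rules
with the commutative implication rules. -/
inductive FLew : List EForm → Option EForm → Prop
  | id (A : EForm) : FLew [A] (some A)
  | oneR : FLew [] (some EForm.one)
  | zeroL : FLew [EForm.zero] none
  | cut {X Y Z : List EForm} {D : Option EForm} {A : EForm} :
      FLew X (some A) → FLew (Y ++ A :: Z) D → FLew (Y ++ X ++ Z) D
  | exch {X Y : List EForm} {D : Option EForm} {A B : EForm} :
      FLew (X ++ A :: B :: Y) D → FLew (X ++ B :: A :: Y) D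
  | wkL {X Y : List EForm} {D : Option EForm} (A : EForm) :
      FLew (X ++ Y) D → FLew (X ++ A :: Y) D
  | wkR {X : List EForm} (A : EForm) : FLew X none → FLew X (some A)
  | oneW {X Y : List EForm} {D : Option EForm} :
      FLew (X ++ Y) D → FLew (X ++ EForm.one :: Y) D
  | zeroW {X : List EForm} : FLew X none → FLew X (some EForm.zero)
  | conjL1 {X Y : List EForm} {D : Option EForm} {A : EForm} (B : EForm) :
      FLew (X ++ A :: Y) D → FLew (X ++ EForm.conj A B :: Y) D
  | conjL2 {X Y : List EForm} {D : Option EForm} {B : EForm} (A : EForm) :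
      FLew (X ++ B :: Y) D → FLew (X ++ EForm.conj A B :: Y) D
  | conjR {X : List EForm} {A B : EForm} :
      FLew X (some A) → FLew X (some B) → FLew X (some (EForm.conj A B))
  | disjL {X Y : List EForm} {D : Option EForm} {A B : EForm} :
      FLew (X ++ A :: Y) D → FLew (X ++ B :: Y) D → FLew (X ++ EForm.disj A B :: Y) D
  | disjR1 {X : List EForm} {A : EForm} (B : EForm) :
      FLew X (some A) → FLew X (some (EForm.disj A B))
  | disjR2 {X : List EForm} {B : EForm} (A : EForm) :
      FLew X (some B) → FLew X (some (EForm.disj A B))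
  | fuseL {X Y : List EForm} {D : Option EForm} {A B : EForm} :
      FLew (X ++ A :: B :: Y) D → FLew (X ++ EForm.fuse A B :: Y) D
  | fuseR {X Y : List EForm} {A B : EForm} :
      FLew X (some A) → FLew Y (some B) → FLew (X ++ Y) (some (EForm.fuse A B))
  | impL {G P X : List EForm} {D : Option EForm} {A B : EForm} :
      FLew G (some A) → FLew (P ++ B :: X) D → FLew (P ++ G ++ EForm.imp A B :: X) D
  | impR {G : List EForm} {A B : EForm} :
      FLew (A :: G) (some B) → FLew G (some (EForm.imp A B))

lemma eform_single {X Y : List EForm} {A : EForm}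
    (h : (X ++ A :: Y).length ≤ 1) : X = [] ∧ Y = [] := by
  cases X <;> cases Y <;> simp_all

lemma cfl_main : ∀ {G D : List EForm}, CFLcf true G D →
    (∀ B ∈ G, B.zeroFree) → (∀ B ∈ D, B.zeroFree) → D.length ≤ 1 →
    ∃ d, D = [d] ∧ FLew G (some d) := by
  intro G D h
  induction h with
  | id A => intro _ _ _; exact ⟨A, rfl, FLew.id A⟩
  | oneR => intro _ _ _; exact ⟨EForm.one, rfl, FLew.oneR⟩
  | zeroL =>
    intro hG _ _
    exact absurd (hG EForm.zero (by simp)) (by simp [EForm.zeroFree])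
  | exL h ih =>
    intro hG hD hlen
    obtain ⟨d, rfl, hd⟩ := ih (by intro B hB; apply hG; simp at hB ⊢; tauto) hD hlen
    exact ⟨d, rfl, FLew.exch hd⟩
  | exR h ih =>
    intro hG hD hlen
    obtain ⟨h1, h2⟩ := eform_single hlen
    simp [h1] at hlen
  | wkL hw A h ih =>
    intro hG hD hlen
    obtain ⟨d, rfl, hd⟩ := ih (by intro B hB; apply hG; simp at hB ⊢; tauto) hD hlen
    exact ⟨d, rfl, FLew.wkL A hd⟩
  | wkR hw A h ih =>
    intro hG hD hlen
    obtain ⟨rfl, rfl⟩ := eform_single hlen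
    obtain ⟨d, hd, _⟩ := ih hG (by simp) (by simp)
    simp at hd
  | oneW h ih =>
    intro hG hD hlen
    obtain ⟨d, rfl, hd⟩ := ih (by intro B hB; apply hG; simp at hB ⊢; tauto) hD hlen
    exact ⟨d, rfl, FLew.oneW hd⟩
  | zeroW h ih =>
    intro hG hD hlen
    exact absurd (hD EForm.zero (by simp)) (by simp [EForm.zeroFree])
  | @conjL1 X Y D A B h ih =>
    intro hG hD hlen
    have hAB := hG (EForm.conj A B) (by simp)
    obtain ⟨d, rfl, hd⟩ := ih
      (by intro C hC; simp at hC; rcases hC with hC | rfl | hC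
          · exact hG C (by simp [hC])
          · exact hAB.1
          · exact hG C (by simp [hC])) hD hlen
    exact ⟨d, rfl, FLew.conjL1 B hd⟩
  | @conjL2 X Y D B A h ih =>
    intro hG hD hlen
    have hAB := hG (EForm.conj A B) (by simp)
    obtain ⟨d, rfl, hd⟩ := ih
      (by intro C hC; simp at hC; rcases hC with hC | rfl | hC
          · exact hG C (by simp [hC])
          · exact hAB.2
          · exact hG C (by simp [hC])) hD hlen
    exact ⟨d, rfl, FLew.conjL2 A hd⟩
  | @conjR G' X Y A B h1 h2 ih1 ih2 =>
    intro hG hD hlen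
    obtain ⟨rfl, rfl⟩ := eform_single hlen
    have hAB := hD (EForm.conj A B) (by simp)
    obtain ⟨d1, hd1, hp1⟩ := ih1 hG (by simpa using hAB.1) (by simp)
    obtain ⟨d2, hd2, hp2⟩ := ih2 hG (by simpa using hAB.2) (by simp)
    simp at hd1 hd2; subst hd1; subst hd2
    exact ⟨_, rfl, FLew.conjR hp1 hp2⟩
  | @disjL X Y D A B h1 h2 ih1 ih2 =>
    intro hG hD hlen
    have hAB := hG (EForm.disj A B) (by simp)
    obtain ⟨d, rfl, hd1⟩ := ih1
      (by intro C hC; simp at hC; rcases hC with hC | rfl | hC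
          · exact hG C (by simp [hC])
          · exact hAB.1
          · exact hG C (by simp [hC])) hD hlen
    obtain ⟨d2, hd2, hp2⟩ := ih2
      (by intro C hC; simp at hC; rcases hC with hC | rfl | hC
          · exact hG C (by simp [hC])
          · exact hAB.2
          · exact hG C (by simp [hC])) hD hlen
    simp at hd2; subst hd2
    exact ⟨d, rfl, FLew.disjL hd1 hp2⟩
  | @disjR1 G' X Y A B h ih =>
    intro hG hD hlen
    obtain ⟨rfl, rfl⟩ := eform_single hlen
    have hAB := hD (EForm.disj A B) (by simp)
    obtain ⟨d, hd, hp⟩ := ih hG (by simpa using hAB.1) (by simp)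
    simp at hd; subst hd
    exact ⟨_, rfl, FLew.disjR1 B hp⟩
  | @disjR2 G' X Y B A h ih =>
    intro hG hD hlen
    obtain ⟨rfl, rfl⟩ := eform_single hlen
    have hAB := hD (EForm.disj A B) (by simp)
    obtain ⟨d, hd, hp⟩ := ih hG (by simpa using hAB.2) (by simp)
    simp at hd; subst hd
    exact ⟨_, rfl, FLew.disjR2 A hp⟩
  | @fuseL X Y D A B h ih =>
    intro hG hD hlen
    have hAB := hG (EForm.fuse A B) (by simp)
    obtain ⟨d, rfl, hd⟩ := ih
      (by intro C hC; simp at hC; rcases hC with hC | rfl | rfl | hC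
          · exact hG C (by simp [hC])
          · exact hAB.1
          · exact hAB.2
          · exact hG C (by simp [hC])) hD hlen
    exact ⟨d, rfl, FLew.fuseL hd⟩
  | @fuseR G1 G2 X Y A B h1 h2 ih1 ih2 =>
    intro hG hD hlen
    obtain ⟨rfl, rfl⟩ := eform_single hlen
    have hAB := hD (EForm.fuse A B) (by simp)
    obtain ⟨d1, hd1, hp1⟩ := ih1 (by intro C hC; exact hG C (by simp [hC]))
      (by simpa using hAB.1) (by simp)
    obtain ⟨d2, hd2, hp2⟩ := ih2 (by intro C hC; exact hG C (by simp [hC]))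
      (by simpa using hAB.2) (by simp)
    simp at hd1 hd2; subst hd1; subst hd2
    exact ⟨_, rfl, FLew.fuseR hp1 hp2⟩
  | @impL G' P X D L A B h1 h2 ih1 ih2 =>
    intro hG hD hlen
    have hAB := hG (EForm.imp A B) (by simp)
    have hG2 : ∀ C ∈ P ++ B :: X, C.zeroFree := by
      intro C hC; simp at hC; rcases hC with hC | rfl | hC
      · exact hG C (by simp [hC])
      · exact hAB.2
      · exact hG C (by simp [hC])
    cases L with
    | cons l ls =>
      have hD0 : D = [] := by
        cases D with
        | nil => rfl
        | cons a as => simp [List.length_append] at hlen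
      subst hD0
      obtain ⟨d, hd, _⟩ := ih2 hG2 (by simp) (by simp)
      simp at hd
    | nil =>
      obtain ⟨dA, hdA, hpA⟩ := ih1 (by intro C hC; exact hG C (by simp [hC]))
        (by intro C hC; simp at hC; subst hC; exact hAB.1) (by simp)
      simp at hdA; subst hdA
      obtain ⟨d, rfl, hp2⟩ := ih2 hG2 (by simpa using hD) (by simpa using hlen)
      exact ⟨d, by simp, FLew.impL hpA hp2⟩
  | @impR G' D A B h ih =>
    intro hG hD hlen
    have hD0 : D = [] := by
      cases D with
      | nil => rfl
      | cons a as => simp at hlen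
    subst hD0
    have hAB := hD (EForm.imp A B) (by simp)
    obtain ⟨d, hd, hp⟩ := ih
      (by intro C hC; simp at hC; rcases hC with rfl | hC
          · exact hAB.1
          · exact hG C hC) (by intro C hC; simp at hC; subst hC; exact hAB.2)
      (by simp)
    simp at hd; subst hd
    exact ⟨_, rfl, FLew.impR hp⟩

theorem statement_14 (G : List EForm) (A : EForm)
    (hG : ∀ B ∈ G, B.zeroFree) (hA : A.zeroFree)
    (h : CFLcf true G [A]) :
    FLew G (some A) := by
  obtain ⟨d, hd, hp⟩ := cfl_main h hG (by simpa using hA) (by simp)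
  simp at hd; subst hd; exact hp
end
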